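/- Let M be a matroid whose ground set E is finite, let e ∈ E, and let M' = M \ e be the matroid obtained from M by deleting e. Let w : E → ℝ be injective on E. If B is a maximum-weight basis of M and B' is a maximum-weight basis of M', then B \ B' ⊆ {e} and B' \ B has at most one element. In other words, deleting the element e changes the maximum-weight basis by at most one element: either the basis stays the same, or e is removed, or e is replaced by a single other element. -/

import Mathlib

/-!
With weights injective on the ground set, an element `x` lies in the maximum-weight base exactly
when it is not spanned by the strictly heavier elements `H x = {y | w x < w y}`: if it were
spanned, some heavier element could be exchanged in for it; if it is not in the base, every other
element of its fundamental circuit is heavier, so the circuit puts `x` in the closure of `H x`.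

Deleting `e` replaces `H x` by `H x \ {e}`, whose closure is smaller, so every element of `B`
other than `e` stays. If `a` and `b` both enter, with `w b < w a`, then `a ∈ cl (H a)` but
`a ∉ cl (H a \ {e})`, so by the exchange property
`e ∈ cl (insert a (H a \ {e})) ⊆ cl (H b \ {e})`. Hence `H b` and `H b \ {e}` have the same
closure, and `b` cannot have entered.
-/

open Matroid Set

lemma finsum_mem_insert_sdiff_singleton {α G : Type*} [AddCommGroup G] (f : α → G) {s : Set α}
    {a b : α} (hs : s.Finite) (ha : a ∈ s) (hb : b ∉ s) :
    ∑ᶠ i ∈ insert b (s \ {a}), f i = ∑ᶠ i ∈ s, f i + f b - f a := by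
  have hsa := finsum_mem_insert f (fun h : a ∈ s \ {a} => h.2 rfl) hs.sdiff
  rw [insert_sdiff_singleton, insert_eq_of_mem ha] at hsa
  rw [finsum_mem_insert f (fun h => hb h.1) hs.sdiff, hsa]
  abel

namespace Matroid

variable {α : Type*} {M : Matroid α} {w : α → ℝ} {B B' X Y : Set α} {a e x : α}

lemma closure_sdiff_singleton_eq_closure_of_insert_subset (hae : a ≠ e)
    (ha : a ∈ M.closure X \ M.closure (X \ {e})) (haXY : insert a X ⊆ Y) :
    M.closure (Y \ {e}) = M.closure Y := by
  have haXe : a ∈ M.closure (insert e (X \ {e})) :=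
    M.closure_subset_closure (subset_insert_sdiff_singleton e X) ha.1
  have he : e ∈ M.closure (insert a (X \ {e})) := (M.closure_exchange ⟨haXe, ha.2⟩).1
  refine closure_sdiff_singleton_eq_closure (M.closure_subset_closure ?_ he)
  exact insert_subset ⟨haXY (mem_insert a X), hae⟩
    (sdiff_subset_sdiff_left ((subset_insert a X).trans haXY))

def IsMaxWeightBase (M : Matroid α) (w : α → ℝ) (B : Set α) : Prop :=
  M.IsBase B ∧ ∀ C, M.IsBase C → ∑ᶠ x ∈ C, w x ≤ ∑ᶠ x ∈ B, w x

namespace IsMaxWeightBase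

variable [M.RankFinite]

lemma weight_le_of_exchange (hB : M.IsMaxWeightBase w B) {y : α} (hx : x ∈ B) (hy : y ∉ B)
    (hyB : M.Indep (insert y (B \ {x}))) : w y ≤ w x := by
  have h := hB.2 _ (hB.1.exchange_isBase_of_indep hy hyB)
  rw [finsum_mem_insert_sdiff_singleton w hB.1.finite hx hy] at h
  linarith

lemma notMem_closure_heavier (hB : M.IsMaxWeightBase w B) (hx : x ∈ B) :
    x ∉ M.closure {y | w x < w y} := by
  intro hxH
  have hxB : x ∉ M.closure (B \ {x}) := hB.1.indep.notMem_closure_sdiff_of_mem hx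
  have hH : ¬ {y | w x < w y} ∩ M.E ⊆ M.closure (B \ {x}) := fun h =>
    hxB (M.closure_subset_closure_of_subset_closure h (by rwa [closure_inter_ground]))
  obtain ⟨y, ⟨hxy, hyE⟩, hycl⟩ := not_subset.1 hH
  have hyx : y ≠ x := fun h => hxy.ne' (congrArg w h)
  have hyB : y ∉ B := fun h => hycl (M.mem_closure_of_mem' ⟨h, hyx⟩ hyE)
  have hind : M.Indep (insert y (B \ {x})) :=
    ((hB.1.indep.sdiff {x}).insert_indep_iff_of_notMem fun h => hyB h.1).2 ⟨hyE, hycl⟩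
  exact (hB.weight_le_of_exchange hx hyB hind).not_gt hxy

lemma mem_of_notMem_closure_heavier (hw : InjOn w M.E) (hB : M.IsMaxWeightBase w B)
    (hxE : x ∈ M.E) (hx : x ∉ M.closure {y | w x < w y}) : x ∈ B := by
  by_contra hxB
  have hC := hB.1.fundCircuit_isCircuit hxE hxB
  refine hx (M.closure_subset_closure ?_
    (hC.mem_closure_sdiff_singleton_of_mem (M.mem_fundCircuit x B)))
  rintro y ⟨hyC, hyx : y ≠ x⟩
  have hyB : y ∈ B := (M.fundCircuit_subset_insert x B hyC).resolve_left hyx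
  have hind : M.Indep (insert x (B \ {y})) := by
    rw [insert_sdiff_singleton_comm hyx.symm]
    exact (hB.1.indep.mem_fundCircuit_iff (by rwa [hB.1.closure_eq]) hxB).1 hyC
  exact (hB.weight_le_of_exchange hyB hxB hind).lt_of_ne
    fun h => hyx (hw hxE (hB.1.subset_ground hyB) h).symm

lemma mem_iff_notMem_closure_heavier (hw : InjOn w M.E) (hB : M.IsMaxWeightBase w B)
    (hxE : x ∈ M.E) : x ∈ B ↔ x ∉ M.closure {y | w x < w y} :=
  ⟨hB.notMem_closure_heavier, hB.mem_of_notMem_closure_heavier hw hxE⟩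

lemma mem_iff_notMem_closure_heavier_sdiff (hw : InjOn w M.E)
    (hB : (M ＼ {e}).IsMaxWeightBase w B) (hxE : x ∈ M.E) (hxe : x ≠ e) :
    x ∈ B ↔ x ∉ M.closure ({y | w x < w y} \ {e}) := by
  rw [hB.mem_iff_notMem_closure_heavier (hw.mono sdiff_subset) ⟨hxE, hxe⟩, delete_closure_eq,
    mem_sdiff, mem_singleton_iff, and_iff_left hxe]

lemma sdiff_subset_of_delete (hw : InjOn w M.E) (hB : M.IsMaxWeightBase w B)
    (hB' : (M ＼ {e}).IsMaxWeightBase w B') : B \ B' ⊆ {e} := by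
  rintro x ⟨hxB, hxB'⟩
  by_contra hxe
  refine hxB' ((hB'.mem_iff_notMem_closure_heavier_sdiff hw (hB.1.subset_ground hxB) hxe).2 ?_)
  exact fun h => hB.notMem_closure_heavier hxB (M.closure_subset_closure sdiff_subset h)

lemma sdiff_subsingleton_of_delete (hw : InjOn w M.E) (hB : M.IsMaxWeightBase w B)
    (hB' : (M ＼ {e}).IsMaxWeightBase w B') : (B' \ B).Subsingleton := by
  have hB'E : B' ⊆ M.E \ {e} := hB'.1.subset_ground
  have hnew : ∀ x ∈ B' \ B,
      x ∈ M.closure {y | w x < w y} \ M.closure ({y | w x < w y} \ {e}) :=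
    fun x ⟨hxB', hxB⟩ =>
      ⟨not_not.1 fun h => hxB (hB.mem_of_notMem_closure_heavier hw (hB'E hxB').1 h),
        (hB'.mem_iff_notMem_closure_heavier_sdiff hw (hB'E hxB').1 (hB'E hxB').2).1 hxB'⟩
  have hlt : ∀ a ∈ B' \ B, ∀ b ∈ B' \ B, ¬ w b < w a := fun a ha b hb hba => by
    have hcl := closure_sdiff_singleton_eq_closure_of_insert_subset (hB'E ha.1).2 (hnew a ha)
      (insert_subset hba fun y hy => hba.trans hy)
    exact (hnew b hb).2 (hcl ▸ (hnew b hb).1)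
  intro a ha b hb
  by_contra hab
  rcases lt_or_gt_of_ne fun h => hab (hw (hB'E ha.1).1 (hB'E hb.1).1 h) with h | h
  exacts [hlt b hb a ha h, hlt a ha b hb h]

end IsMaxWeightBase

end Matroid

theorem delete_changes_max_weight_base_by_at_most_one_general {α : Type*}
    (M : Matroid α) (hE : M.E.Finite) (e : α)
    (w : α → ℝ) (hw : Set.InjOn w M.E)
    (B B' : Set α)
    (hB : M.IsBase B)
    (hBmax : ∀ C : Set α, M.IsBase C → ∑ᶠ x ∈ C, w x ≤ ∑ᶠ x ∈ B, w x)
    (hB' : (M ↾ (M.E \ {e})).IsBase B')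
    (hB'max : ∀ C : Set α, (M ↾ (M.E \ {e})).IsBase C →
      ∑ᶠ x ∈ C, w x ≤ ∑ᶠ x ∈ B', w x) :
    B \ B' ⊆ {e} ∧ (B' \ B).Subsingleton := by
  have : M.Finite := ⟨hE⟩
  have hmax : M.IsMaxWeightBase w B := ⟨hB, hBmax⟩
  have hmax' : (M ＼ {e}).IsMaxWeightBase w B' := ⟨hB', hB'max⟩
  exact ⟨hmax.sdiff_subset_of_delete hw hmax', hmax.sdiff_subsingleton_of_delete hw hmax'⟩

/-- Deleting an element `e` changes the maximum-weight basis by at most one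
element: if `B` is a maximum-weight basis of `M` and `B'` is a maximum-weight
basis of `M \ e`, then `B \ B' ⊆ {e}` and `B' \ B` has at most one element.
Here the deletion `M \ e` is the restriction of `M` to `M.E \ {e}`. -/
theorem delete_changes_max_weight_base_by_at_most_one {α : Type*}
    (M : Matroid α) (hE : M.E.Finite) (e : α) (he : e ∈ M.E)
    (w : α → ℝ) (hw : Set.InjOn w M.E)
    (B B' : Set α)
    (hB : M.IsBase B)
    (hBmax : ∀ C : Set α, M.IsBase C → ∑ᶠ x ∈ C, w x ≤ ∑ᶠ x ∈ B, w x)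
    (hB' : (M ↾ (M.E \ {e})).IsBase B')
    (hB'max : ∀ C : Set α, (M ↾ (M.E \ {e})).IsBase C →
      ∑ᶠ x ∈ C, w x ≤ ∑ᶠ x ∈ B', w x) :
    B \ B' ⊆ {e} ∧ (B' \ B).Subsingleton :=
  delete_changes_max_weight_base_by_at_most_one_general M hE e w hw B B' hB hBmax hB' hB'max
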